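/- Let L be a positive integer, let F(z) = ∑_{n=0}^{N} f(n) z^{−n} with real coefficients f(0), …, f(N) and F(1) = √2 (2L+1) 2^{−2L}, and set H_0(z) = F(z) D_L(z) and G_0(z) = F(z) D_L(1/z) z^{−L} for z ∈ ℂ \ {0}. Assume that for every ω ∈ ℝ the infinite product φ̂_H(ω) = ∏_{j=1}^{∞} 2^{−1/2} H_0(e^{i 2^{−j} ω}) converges (is multipliable), and define φ̂_G(ω) = ∏_{j=1}^{∞} 2^{−1/2} G_0(e^{i 2^{−j} ω}) analogously. Then for every ω ∈ ℝ, φ̂_G(ω) = e^{i β_L(ω)} · φ̂_H(ω) · e^{−iω/2}. -/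

import Mathlib

/-!
On the unit circle, put `z = e^{iv}` and `y = e^{iv/2}`. Then `D_L(z)` is a multiple of
`(1 + y)^{2L+1} + (1 - y)^{2L+1}`, and `D_L(1/z) z^{-L}` is `y⁻¹` times the same multiple of
`(1 + y)^{2L+1} - (1 - y)^{2L+1}`. Since `1 + y = 2 cos(v/4) e^{iv/4}` and
`1 - y = -2i sin(v/4) e^{iv/4}`, the two brackets are, up to a common factor, the conjugate
numbers `c^{2L+1} ∓ i (-1)^L s^{2L+1}` with `c = cos(v/4)`, `s = sin(v/4)`, and their quotient
is `e^{iα_L(v)}`.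
So `G_0(e^{iv}) = e^{iα_L(v)} e^{-iv/2} H_0(e^{iv})`, and in the product over `v = 2^{-j} ω` the
phases add up to `β_L(ω) - ω/2`; the phase series converges because `|α_L(u)| ≤ |u|` for
`|u| ≤ 1`.
-/

open Complex
open scoped Classical

/-- The Thiran common factor `D_L` (closed binomial form). -/
noncomputable def DL (L : ℕ) (z : ℂ) : ℂ :=
  (1 / (2 * (L : ℂ) + 1)) *
    ∑ n ∈ Finset.range (L + 1), (Nat.choose (2 * L + 1) (2 * n) : ℂ) * z ^ ((n : ℤ) - (L : ℤ))

/-- The phase function `α_L`, with the convention `arctan(±∞) = ±π/2` at the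
points `ω ∈ 2π + 4πℤ`. -/
noncomputable def alphaL (L : ℕ) (ω : ℝ) : ℝ :=
  if ∃ k : ℤ, ω = 2 * Real.pi + 4 * Real.pi * k then (-1 : ℝ) ^ L * Real.pi
  else 2 * (-1 : ℝ) ^ L * Real.arctan (Real.tan (ω / 4) ^ (2 * L + 1))

/-- The phase function `β_L(ω) = ∑_{j=1}^∞ α_L(2^{-j} ω)`. -/
noncomputable def betaL (L : ℕ) (ω : ℝ) : ℝ :=
  ∑' j : ℕ, alphaL L (ω / 2 ^ (j + 1))

open Finset in
theorem sum_range_two_mul {M : Type*} [AddCommMonoid M] (f : ℕ → M) (n : ℕ) :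
    ∑ k ∈ range (2 * n), f k = ∑ i ∈ range n, (f (2 * i) + f (2 * i + 1)) := by
  induction n with
  | zero => simp
  | succ n ih =>
    rw [mul_add, mul_one, sum_range_succ, sum_range_succ, sum_range_succ, ih, add_assoc]

open Finset in
theorem two_mul_sum_range_choose_mul_pow_two_mul {R : Type*} [CommRing R] (m : ℕ) (y : R) :
    2 * ∑ n ∈ range (m + 1), ((2 * m + 1).choose (2 * n) : R) * y ^ (2 * n)
      = (1 + y) ^ (2 * m + 1) + (1 - y) ^ (2 * m + 1) := by
  rw [add_comm 1 y, sub_eq_add_neg, add_comm 1 (-y), add_pow, add_pow, ← sum_add_distrib,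
    show 2 * m + 1 + 1 = 2 * (m + 1) by ring, sum_range_two_mul, mul_sum]
  refine sum_congr rfl fun n _ => ?_
  simp only [one_pow, mul_one, pow_succ, pow_mul]
  ring

theorem two_mul_DL_sq (L : ℕ) {y : ℂ} (hy : y ≠ 0) :
    2 * (2 * L + 1) * y ^ (2 * L) * DL L (y ^ 2)
      = (1 + y) ^ (2 * L + 1) + (1 - y) ^ (2 * L + 1) := by
  have hL : (2 * L + 1 : ℂ) ≠ 0 := by exact_mod_cast (2 * L).succ_ne_zero
  have hpow (n : ℕ) : y ^ (2 * L) * (y ^ 2) ^ ((n : ℤ) - L) = y ^ (2 * n) := by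
    rw [← zpow_natCast, ← zpow_natCast, ← zpow_natCast, ← zpow_mul, ← zpow_add₀ hy]
    congr 1; push_cast; ring
  have hsum : y ^ (2 * L) * ∑ n ∈ Finset.range (L + 1),
        ((2 * L + 1).choose (2 * n) : ℂ) * (y ^ 2) ^ ((n : ℤ) - L)
      = ∑ n ∈ Finset.range (L + 1), ((2 * L + 1).choose (2 * n) : ℂ) * y ^ (2 * n) := by
    rw [Finset.mul_sum]
    exact Finset.sum_congr rfl fun n _ => by rw [← hpow n]; ring
  rw [DL, ← two_mul_sum_range_choose_mul_pow_two_mul L y, ← hsum]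
  field_simp

theorem two_mul_DL_inv_sq (L : ℕ) {y : ℂ} (hy : y ≠ 0) :
    2 * (2 * L + 1) * y ^ (2 * L + 1) * (DL L (1 / y ^ 2) * (y ^ 2) ^ (-(L : ℤ)))
      = (1 + y) ^ (2 * L + 1) - (1 - y) ^ (2 * L + 1) := by
  have hzpow : (y ^ 2) ^ (-(L : ℤ)) = y⁻¹ ^ (2 * L) := by
    rw [zpow_neg, zpow_natCast, ← pow_mul, inv_pow]
  calc 2 * (2 * L + 1) * y ^ (2 * L + 1) * (DL L (1 / y ^ 2) * (y ^ 2) ^ (-(L : ℤ)))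
      = y ^ (2 * L + 1) * (2 * (2 * L + 1) * y⁻¹ ^ (2 * L) * DL L (y⁻¹ ^ 2)) := by
        rw [hzpow, one_div, ← inv_pow]
        ring
    _ = (y * (1 + y⁻¹)) ^ (2 * L + 1) + (y * (1 - y⁻¹)) ^ (2 * L + 1) := by
        rw [two_mul_DL_sq L (inv_ne_zero hy), mul_pow, mul_pow]; ring
    _ = (1 + y) ^ (2 * L + 1) - (1 - y) ^ (2 * L + 1) := by
        rw [mul_one_add, mul_one_sub, mul_inv_cancel₀ hy, ← neg_sub 1 y,
          Odd.neg_pow ⟨L, rfl⟩]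
        ring

theorem one_add_exp_two_mul_mul_I (θ : ℂ) :
    1 + exp (2 * θ * I) = 2 * cos θ * exp (θ * I) := by
  have h₁ : exp (-θ * I) * exp (θ * I) = 1 := by rw [← exp_add]; ring_nf; exact exp_zero
  have h₂ : exp (θ * I) * exp (θ * I) = exp (2 * θ * I) := by rw [← exp_add]; ring_nf
  linear_combination (-exp (θ * I)) * two_cos θ - h₁ - h₂

theorem one_sub_exp_two_mul_mul_I (θ : ℂ) :
    1 - exp (2 * θ * I) = -2 * I * sin θ * exp (θ * I) := by
  have h₁ : exp (-θ * I) * exp (θ * I) = 1 := by rw [← exp_add]; ring_nf; exact exp_zero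
  have h₂ : exp (θ * I) * exp (θ * I) = exp (2 * θ * I) := by rw [← exp_add]; ring_nf
  linear_combination (I * exp (θ * I)) * two_sin θ +
    (exp (-θ * I) * exp (θ * I) - exp (θ * I) ^ 2) * I_sq - h₁ + h₂

theorem exp_two_mul_arctan_mul_I_mul (t : ℝ) :
    exp (2 * Real.arctan t * I) * (1 - t * I) = 1 + t * I := by
  have hr : (0 : ℝ) < √(1 + t ^ 2) := by positivity
  have hr2 : ((√(1 + t ^ 2) : ℝ) : ℂ) ^ 2 = 1 + t ^ 2 := by
    exact_mod_cast Real.sq_sqrt (by positivity : (0 : ℝ) ≤ 1 + t ^ 2)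
  have hexp : exp (Real.arctan t * I) = (1 + t * I) / √(1 + t ^ 2) := by
    rw [exp_mul_I, ← ofReal_cos, ← ofReal_sin, Real.cos_arctan, Real.sin_arctan]
    push_cast
    ring
  have hr0 : ((√(1 + t ^ 2) : ℝ) : ℂ) ≠ 0 := by exact_mod_cast hr.ne'
  have hsq : exp (2 * Real.arctan t * I) = exp (Real.arctan t * I) ^ 2 := by
    rw [← exp_nat_mul]; ring_nf
  rw [hsq, hexp]
  field_simp
  linear_combination -(1 + t * I) * hr2 - (1 + t * I) * t ^ 2 * I_sq

theorem exists_int_eq_two_pi_add_four_pi_mul_iff (v : ℝ) :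
    (∃ k : ℤ, v = 2 * Real.pi + 4 * Real.pi * k) ↔ Real.cos (v / 4) = 0 := by
  rw [Real.cos_eq_zero_iff]
  constructor
  · rintro ⟨k, rfl⟩; exact ⟨k, by ring⟩
  · rintro ⟨k, hk⟩; exact ⟨k, by linarith⟩

theorem alphaL_of_cos_eq_zero (L : ℕ) {v : ℝ} (hv : Real.cos (v / 4) = 0) :
    alphaL L v = (-1) ^ L * Real.pi := by
  rw [alphaL, if_pos ((exists_int_eq_two_pi_add_four_pi_mul_iff v).2 hv)]

theorem alphaL_of_cos_ne_zero (L : ℕ) {v : ℝ} (hv : Real.cos (v / 4) ≠ 0) :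
    alphaL L v = 2 * Real.arctan ((-1) ^ L * Real.tan (v / 4) ^ (2 * L + 1)) := by
  rw [alphaL, if_neg (mt (exists_int_eq_two_pi_add_four_pi_mul_iff v).1 hv)]
  rcases Nat.even_or_odd L with hL | hL <;> simp [hL.neg_one_pow, Real.arctan_neg]

theorem cos_pow_add_I_mul_sin_pow_eq_exp_alphaL_mul (L : ℕ) (v : ℝ) :
    (Real.cos (v / 4) : ℂ) ^ (2 * L + 1) + I * (-1) ^ L * (Real.sin (v / 4) : ℂ) ^ (2 * L + 1)
      = exp (I * alphaL L v) * ((Real.cos (v / 4) : ℂ) ^ (2 * L + 1)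
          - I * (-1) ^ L * (Real.sin (v / 4) : ℂ) ^ (2 * L + 1)) := by
  by_cases hc : Real.cos (v / 4) = 0
  · have hexp : exp (I * alphaL L v) = -1 := by
      rw [alphaL_of_cos_eq_zero L hc]
      rcases Nat.even_or_odd L with hL | hL <;> simp [hL.neg_one_pow, mul_comm I]
    rw [hexp, hc, ofReal_zero, zero_pow (2 * L).succ_ne_zero]
    ring
  · set t : ℝ := (-1) ^ L * Real.tan (v / 4) ^ (2 * L + 1)
    have hct : (Real.cos (v / 4) : ℂ) ^ (2 * L + 1) * t
        = (-1) ^ L * (Real.sin (v / 4) : ℂ) ^ (2 * L + 1) := by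
      have : Real.cos (v / 4) ^ (2 * L + 1) * t = (-1) ^ L * Real.sin (v / 4) ^ (2 * L + 1) := by
        simp only [t, Real.tan_eq_sin_div_cos, div_pow]
        field_simp
      exact_mod_cast this
    have hα : I * (alphaL L v : ℂ) = 2 * Real.arctan t * I := by
      rw [alphaL_of_cos_ne_zero L hc, ofReal_mul, ofReal_ofNat]; ring
    rw [hα]
    linear_combination -(Real.cos (v / 4) : ℂ) ^ (2 * L + 1) * exp_two_mul_arctan_mul_I_mul t
      - (I + exp (2 * Real.arctan t * I) * I) * hct

theorem DL_inv_mul_zpow_exp (L : ℕ) (v : ℝ) :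
    DL L (1 / exp (I * v)) * exp (I * v) ^ (-(L : ℤ))
      = exp (I * alphaL L v) * exp (-(I * v) / 2) * DL L (exp (I * v)) := by
  set c : ℂ := ↑(Real.cos (v / 4))
  set s : ℂ := ↑(Real.sin (v / 4))
  set w : ℂ := exp ((v / 4 : ℝ) * I)
  set y : ℂ := exp (2 * (v / 4 : ℝ) * I)
  have hy : y ≠ 0 := exp_ne_zero _
  have hz : exp (I * v) = y ^ 2 := by rw [← exp_nat_mul]; push_cast; ring_nf
  have hhalf : exp (-(I * v) / 2) = y⁻¹ := by rw [← exp_neg]; push_cast; ring_nf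
  have hIpow : I ^ (2 * L + 1) = I * (-1) ^ L := by rw [pow_succ, pow_mul, I_sq, mul_comm]
  have hplus : (1 + y) ^ (2 * L + 1) = (2 * w) ^ (2 * L + 1) * c ^ (2 * L + 1) := by
    rw [one_add_exp_two_mul_mul_I, ← ofReal_cos]; ring
  have hminus :
      (1 - y) ^ (2 * L + 1) = -(2 * w) ^ (2 * L + 1) * (I * (-1) ^ L * s ^ (2 * L + 1)) := by
    rw [one_sub_exp_two_mul_mul_I, ← ofReal_sin, ← hIpow, neg_mul, neg_mul, neg_mul,
      Odd.neg_pow ⟨L, rfl⟩]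
    ring
  have hK : (2 * (2 * L + 1) * y ^ (2 * L + 1) : ℂ) ≠ 0 := by
    have : (2 * L + 1 : ℂ) ≠ 0 := by exact_mod_cast (2 * L).succ_ne_zero
    exact mul_ne_zero (mul_ne_zero two_ne_zero this) (pow_ne_zero _ hy)
  rw [hz, hhalf]
  refine mul_left_cancel₀ hK ?_
  rw [two_mul_DL_inv_sq L hy]
  calc (1 + y) ^ (2 * L + 1) - (1 - y) ^ (2 * L + 1)
      = exp (I * alphaL L v) * ((1 + y) ^ (2 * L + 1) + (1 - y) ^ (2 * L + 1)) := by
        rw [hplus, hminus]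
        linear_combination (2 * w) ^ (2 * L + 1) * cos_pow_add_I_mul_sin_pow_eq_exp_alphaL_mul L v
    _ = _ := by
        rw [← two_mul_DL_sq L hy]
        field_simp
        ring

theorem abs_arctan_le_abs (x : ℝ) : |Real.arctan x| ≤ |x| := by
  have key (y : ℝ) (hy : 0 ≤ y) : Real.arctan y ≤ y := by
    simpa only [Real.tan_arctan] using
      Real.le_tan (Real.arctan_nonneg.2 hy) (Real.arctan_lt_pi_div_two y)
  rcases le_total 0 x with hx | hx
  · rw [abs_of_nonneg hx, abs_of_nonneg (Real.arctan_nonneg.2 hx)]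
    exact key x hx
  · rw [abs_of_nonpos hx, abs_of_nonpos (Real.arctan_le_zero.2 hx), ← Real.arctan_neg]
    exact key (-x) (neg_nonneg.2 hx)

theorem half_le_cos_div_four {u : ℝ} (hu : |u| ≤ 1) : 1 / 2 ≤ Real.cos (u / 4) := by
  have h := Real.one_sub_sq_div_two_le_cos (x := u / 4)
  nlinarith [abs_le.1 hu]

theorem abs_tan_div_four_le {u : ℝ} (hu : |u| ≤ 1) : |Real.tan (u / 4)| ≤ |u| / 2 := by
  have hcos := half_le_cos_div_four hu
  have hsin : |Real.sin (u / 4)| ≤ |u| / 4 := by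
    simpa [abs_div] using Real.abs_sin_le_abs (x := u / 4)
  rw [Real.tan_eq_sin_div_cos, abs_div, abs_of_pos (a := Real.cos (u / 4)) (by linarith)]
  calc |Real.sin (u / 4)| / Real.cos (u / 4) ≤ (|u| / 4) / (1 / 2) :=
        div_le_div₀ (by positivity) hsin (by norm_num) hcos
    _ = |u| / 2 := by ring

theorem abs_alphaL_le (L : ℕ) {u : ℝ} (hu : |u| ≤ 1) : |alphaL L u| ≤ |u| := by
  have htan := abs_tan_div_four_le hu
  rw [alphaL_of_cos_ne_zero L (by linarith [half_le_cos_div_four hu])]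
  calc |2 * Real.arctan ((-1) ^ L * Real.tan (u / 4) ^ (2 * L + 1))|
      ≤ 2 * |Real.tan (u / 4)| ^ (2 * L + 1) := by
        rw [abs_mul, abs_two]
        simpa [abs_mul] using abs_arctan_le_abs ((-1) ^ L * Real.tan (u / 4) ^ (2 * L + 1))
    _ ≤ 2 * |Real.tan (u / 4)| :=
        mul_le_mul_of_nonneg_left (pow_le_of_le_one (abs_nonneg _)
          (by linarith [abs_le.1 hu]) (2 * L).succ_ne_zero) two_pos.le
    _ ≤ |u| := by linarith

theorem hasSum_div_two_pow_succ (a : ℝ) : HasSum (fun j : ℕ => a / 2 ^ (j + 1)) a := by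
  simpa only [div_div, ← pow_succ'] using hasSum_geometric_two' a

theorem hasSum_alphaL_div_two_pow_succ (L : ℕ) (ω : ℝ) :
    HasSum (fun j : ℕ => alphaL L (ω / 2 ^ (j + 1))) (betaL L ω) := by
  refine Summable.hasSum (.of_norm_bounded_eventually_nat
    (hasSum_div_two_pow_succ |ω|).summable ?_)
  have hsmall := (tendsto_order.1 (hasSum_div_two_pow_succ |ω|).summable.tendsto_atTop_zero).2 1
    one_pos
  filter_upwards [hsmall] with j hj
  have habs : |ω / 2 ^ (j + 1)| = |ω| / 2 ^ (j + 1) := by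
    rw [abs_div, abs_of_pos (by positivity : (0 : ℝ) < 2 ^ (j + 1))]
  rw [Real.norm_eq_abs, ← habs]
  exact abs_alphaL_le L (habs ▸ hj.le)

theorem tprod_exp_mul {ι : Type*} {c : ι → ℂ} {S : ℂ} (hc : HasSum c S) {f : ι → ℂ}
    (hf : Multipliable f) : ∏' j, exp (c j) * f j = exp S * ∏' j, f j :=
  (hc.cexp.mul hf.hasProd).tprod_eq

theorem commonFactor_scaling_relation_general (L : ℕ)
    (F H0 G0 : ℂ → ℂ)
    (hH0 : ∀ z : ℂ, z ≠ 0 → H0 z = F z * DL L z)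
    (hG0 : ∀ z : ℂ, z ≠ 0 → G0 z = F z * DL L (1 / z) * z ^ (-(L : ℤ)))
    (phiH phiG : ℝ → ℂ)
    (hMulH : ∀ ω : ℝ, Multipliable fun j : ℕ =>
      (1 / (Real.sqrt 2 : ℂ)) * H0 (Complex.exp (Complex.I * ((ω / 2 ^ (j + 1) : ℝ) : ℂ))))
    (hphiH : ∀ ω : ℝ, phiH ω = ∏' j : ℕ,
      (1 / (Real.sqrt 2 : ℂ)) * H0 (Complex.exp (Complex.I * ((ω / 2 ^ (j + 1) : ℝ) : ℂ))))
    (hphiG : ∀ ω : ℝ, phiG ω = ∏' j : ℕ,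
      (1 / (Real.sqrt 2 : ℂ)) * G0 (Complex.exp (Complex.I * ((ω / 2 ^ (j + 1) : ℝ) : ℂ)))) :
    ∀ ω : ℝ, phiG ω =
      Complex.exp (Complex.I * (betaL L ω : ℂ)) * phiH ω *
        Complex.exp (-(Complex.I * (ω : ℂ)) / 2) := by
  intro ω
  set phase : ℕ → ℂ :=
    fun j => I * alphaL L (ω / 2 ^ (j + 1)) + -(I * ↑(ω / 2 ^ (j + 1))) / 2
  have hG0H0 (j : ℕ) : 1 / (√2 : ℂ) * G0 (exp (I * ↑(ω / 2 ^ (j + 1))))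
      = exp (phase j) * (1 / (√2 : ℂ) * H0 (exp (I * ↑(ω / 2 ^ (j + 1))))) := by
    rw [hG0 _ (exp_ne_zero _), hH0 _ (exp_ne_zero _), mul_assoc (F _), DL_inv_mul_zpow_exp,
      exp_add]
    ring
  have hphase : HasSum phase (I * betaL L ω + -(I * ω) / 2) :=
    ((hasSum_ofReal.2 (hasSum_alphaL_div_two_pow_succ L ω)).mul_left I).add
      (((hasSum_ofReal.2 (hasSum_div_two_pow_succ ω)).mul_left I).neg.div_const 2)
  rw [hphiG, hphiH, tprod_congr hG0H0, tprod_exp_mul hphase (hMulH ω), exp_add]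
  ring

/-- Relation between the scaling functions `φ̂_G` and `φ̂_H` of a
common-factor filter pair. -/
theorem commonFactor_scaling_relation (L : ℕ) (hL : 0 < L) (N : ℕ) (f : ℕ → ℝ)
    (F H0 G0 : ℂ → ℂ)
    (hF : ∀ z : ℂ, z ≠ 0 → F z = ∑ n ∈ Finset.range (N + 1), (f n : ℂ) * z ^ (-(n : ℤ)))
    (hF1 : F 1 = (Real.sqrt 2 : ℂ) * (2 * (L : ℂ) + 1) * 2 ^ (-(2 * (L : ℤ))))
    (hH0 : ∀ z : ℂ, z ≠ 0 → H0 z = F z * DL L z)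
    (hG0 : ∀ z : ℂ, z ≠ 0 → G0 z = F z * DL L (1 / z) * z ^ (-(L : ℤ)))
    (phiH phiG : ℝ → ℂ)
    (hMulH : ∀ ω : ℝ, Multipliable fun j : ℕ =>
      (1 / (Real.sqrt 2 : ℂ)) * H0 (Complex.exp (Complex.I * ((ω / 2 ^ (j + 1) : ℝ) : ℂ))))
    (hMulG : ∀ ω : ℝ, Multipliable fun j : ℕ =>
      (1 / (Real.sqrt 2 : ℂ)) * G0 (Complex.exp (Complex.I * ((ω / 2 ^ (j + 1) : ℝ) : ℂ))))
    (hphiH : ∀ ω : ℝ, phiH ω = ∏' j : ℕ,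
      (1 / (Real.sqrt 2 : ℂ)) * H0 (Complex.exp (Complex.I * ((ω / 2 ^ (j + 1) : ℝ) : ℂ))))
    (hphiG : ∀ ω : ℝ, phiG ω = ∏' j : ℕ,
      (1 / (Real.sqrt 2 : ℂ)) * G0 (Complex.exp (Complex.I * ((ω / 2 ^ (j + 1) : ℝ) : ℂ)))) :
    ∀ ω : ℝ, phiG ω =
      Complex.exp (Complex.I * (betaL L ω : ℂ)) * phiH ω *
        Complex.exp (-(Complex.I * (ω : ℂ)) / 2) :=
  commonFactor_scaling_relation_general L F H0 G0 hH0 hG0 phiH phiG hMulH hphiH hphiG
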